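/- Let G = (V ∪ {a}, E) and M be graphs on disjoint vertex sets. The module-substitution graph G_a[M] is a comparability graph if and only if both G and M are comparability graphs. -/

import Mathlib

/-!
Both `G` and `M` are induced subgraphs of `G_a[M]` (for `G`, any vertex of `M` stands in for `a`),
and a transitive orientation restricts to induced subgraphs. Conversely, orient `G_a[M]`
lexicographically: edges inside `M` as in `M`, every other edge as in `G` with each vertex of `M`
in the role of `a`.
-/

section Defs

variable {V : Type*}

/-- Two letters alternate in a word: the subword over `{a,b}` has no equal consecutive letters. -/
def Alternates [DecidableEq V] (w : List V) (a b : V) : Prop :=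
  (w.filter (fun x => decide (x = a ∨ x = b))).Chain' (· ≠ ·)

/-- A word over the vertex set represents a graph: every vertex occurs, and two distinct
vertices are adjacent iff they alternate in the word. -/
def Represents [DecidableEq V] (w : List V) (G : SimpleGraph V) : Prop :=
  (∀ v : V, v ∈ w) ∧ ∀ a b : V, a ≠ b → (G.Adj a b ↔ Alternates w a b)

def WordRepresentable [DecidableEq V] (G : SimpleGraph V) : Prop :=
  ∃ w : List V, Represents w G

/-- Every letter occurs exactly `k` times. -/
def IsKUniform [DecidableEq V] (w : List V) (k : ℕ) : Prop :=
  ∀ v : V, w.count v = k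

/-- `k` is the representation number of `G`. -/
def RepNumIs [DecidableEq V] (G : SimpleGraph V) (k : ℕ) : Prop :=
  IsLeast {n : ℕ | ∃ w : List V, IsKUniform w n ∧ Represents w G} k

/-- `p` is a permutation of the vertex set (as a list). -/
def IsPermOn (p : List V) : Prop := p.Nodup ∧ ∀ v : V, v ∈ p

/-- `G` is representable by a concatenation of `k` permutations of its vertex set. -/
def PermRepresents [DecidableEq V] (G : SimpleGraph V) (k : ℕ) : Prop :=
  ∃ ps : List (List V), ps.length = k ∧ (∀ p ∈ ps, IsPermOn p) ∧ Represents ps.flatten G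

/-- `k` is the permutation-representation number of `G`. -/
def PrnIs [DecidableEq V] (G : SimpleGraph V) (k : ℕ) : Prop :=
  IsLeast {n : ℕ | PermRepresents G n} k

/-- A comparability graph: a graph admitting a transitive orientation of its edges. -/
def IsComparability (G : SimpleGraph V) : Prop :=
  ∃ lt : V → V → Prop, Transitive lt ∧ (∀ a b, lt a b → G.Adj a b) ∧
    (∀ a b, G.Adj a b → (lt a b ↔ ¬ lt b a))

/-- A module: every outside vertex is adjacent to all of `M` or to none of `M`. -/
def IsModule (G : SimpleGraph V) (M : Set V) : Prop :=
  ∀ x ∉ M, (∀ m ∈ M, G.Adj x m) ∨ (∀ m ∈ M, ¬ G.Adj x m)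

end Defs

/-- The graph obtained from `G` by replacing the vertex `a` with the module `M`. -/
def substGraph {W V' : Type*} (G : SimpleGraph W) (a : W) (M : SimpleGraph V') :
    SimpleGraph ({x : W // x ≠ a} ⊕ V') where
  Adj x y :=
    match x, y with
    | Sum.inl u, Sum.inl v => G.Adj u.1 v.1
    | Sum.inl u, Sum.inr _ => G.Adj u.1 a
    | Sum.inr _, Sum.inl v => G.Adj a v.1
    | Sum.inr u, Sum.inr v => M.Adj u v
  symm := ⟨by
    rintro (u | u) (v | v) h
    · exact h.symm
    · exact h.symm
    · exact h.symm
    · exact h.symm⟩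
  loopless := ⟨by
    rintro (u | u) h
    · exact G.loopless.1 _ h
    · exact M.loopless.1 _ h⟩

/-- The quotient graph of a modular partition: parts are adjacent iff completely adjacent. -/
def quotientGraph {V : Type*} (G : SimpleGraph V) {n : ℕ} (Mod : Fin n → Set V) :
    SimpleGraph (Fin n) where
  Adj i j := i ≠ j ∧ ∀ a ∈ Mod i, ∀ b ∈ Mod j, G.Adj a b
  symm := ⟨by
    rintro i j ⟨hij, h⟩
    exact ⟨hij.symm, fun a ha b hb => (h b hb a ha).symm⟩⟩
  loopless := ⟨by rintro i ⟨h, _⟩; exact h rfl⟩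

/-- The lexicographical product of two graphs. -/
def lexProd {V V' : Type*} (G : SimpleGraph V) (G' : SimpleGraph V') :
    SimpleGraph (V × V') where
  Adj x y := G.Adj x.1 y.1 ∨ (x.1 = y.1 ∧ G'.Adj x.2 y.2)
  symm := ⟨by
    rintro ⟨a, a'⟩ ⟨b, b'⟩ (h | ⟨h1, h2⟩)
    · exact Or.inl h.symm
    · exact Or.inr ⟨h1.symm, h2.symm⟩⟩
  loopless := ⟨by
    rintro ⟨a, a'⟩ (h | ⟨_, h⟩)
    · exact G.loopless.1 _ h
    · exact G'.loopless.1 _ h⟩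

theorem IsComparability.of_embedding {V W : Type*} {H : SimpleGraph V} {G : SimpleGraph W}
    (f : H ↪g G) (hG : IsComparability G) : IsComparability H := by
  obtain ⟨lt, htrans, hadj, hasymm⟩ := hG
  exact ⟨fun u v => lt (f u) (f v), fun _ _ _ huv hvw => htrans huv hvw,
    fun u v h => f.map_adj_iff.mp (hadj _ _ h), fun u v h => hasymm _ _ (f.map_adj_iff.mpr h)⟩

namespace substGraph

variable {W V' : Type*} (G : SimpleGraph W) (a : W) (M : SimpleGraph V')

def inrEmbedding : M ↪g substGraph G a M where
  toFun := Sum.inr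
  inj' := Sum.inr_injective
  map_rel_iff' := Iff.rfl

open Classical in
noncomputable def embedding (m : V') : G ↪g substGraph G a M where
  toFun v := if h : v = a then Sum.inr m else Sum.inl ⟨v, h⟩
  inj' u v huv := by
    by_cases hu : u = a <;> by_cases hv : v = a <;> simp_all
  map_rel_iff' {u v} := by
    by_cases hu : u = a <;> by_cases hv : v = a <;> simp [hu, hv, substGraph]

def lexOrientation (ltG : W → W → Prop) (ltM : V' → V' → Prop) :
    {x : W // x ≠ a} ⊕ V' → {x : W // x ≠ a} ⊕ V' → Prop
  | Sum.inl u, Sum.inl v => ltG u.1 v.1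
  | Sum.inl u, Sum.inr _ => ltG u.1 a
  | Sum.inr _, Sum.inl v => ltG a v.1
  | Sum.inr x, Sum.inr y => ltM x y

variable {G a M}

theorem _root_.IsComparability.substGraph (hG : IsComparability G) (hM : IsComparability M) :
    IsComparability (substGraph G a M) := by
  obtain ⟨ltG, hGt, hGa, hGi⟩ := hG
  obtain ⟨ltM, hMt, hMa, hMi⟩ := hM
  refine ⟨lexOrientation a ltG ltM, ?_, ?_, ?_⟩
  · rintro (x | x) (y | y) (z | z) hxy hyz
    · exact hGt hxy hyz
    · exact hGt hxy hyz
    · exact hGt hxy hyz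
    · exact hxy
    · exact hGt hxy hyz
    -- a path `M → v → M` through an outside vertex `v` would orient the edge `va` both ways
    · exact absurd hxy ((hGi _ _ (hGa _ _ hyz)).mp hyz)
    · exact hyz
    · exact hMt hxy hyz
  · rintro (x | x) (y | y) h
    · exact hGa _ _ h
    · exact hGa _ _ h
    · exact hGa _ _ h
    · exact hMa _ _ h
  · rintro (x | x) (y | y) h
    · exact hGi _ _ h
    · exact hGi _ _ h
    · exact hGi _ _ h
    · exact hMi _ _ h

end substGraph

/-- `G_a[M]` is a comparability graph iff both `G` and `M` are. -/
theorem stmt9 {W V' : Type*} [Nonempty V'] (G : SimpleGraph W) (a : W)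
    (M : SimpleGraph V') :
    IsComparability (substGraph G a M) ↔
      (IsComparability G ∧ IsComparability M) := by
  obtain ⟨m⟩ := ‹Nonempty V'›
  exact ⟨fun h => ⟨h.of_embedding (substGraph.embedding G a M m),
      h.of_embedding (substGraph.inrEmbedding G a M)⟩,
    fun ⟨hG, hM⟩ => hG.substGraph hM⟩
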